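/- Fix integers d ≥ 1 and v, f with d+1 < v. Let Z be a zero pattern assigning to each column index j ∈ {1,…,f} a proper subset Z(j) ⊊ {1,…,v}, and let 𝒮 be the set of real v×f matrices S of rank d+1 such that S_{ij} = 0 if and only if i ∈ Z(j). Let S, S′ ∈ 𝒮, where S satisfies the facet-rank condition (for every j the rows of S indexed by Z(j) span a d-dimensional subspace), and let B be a Gale transform of S and B′ a Gale transform of S′. Then the following are equivalent: (i) there exist nonzero reals λ_1,…,λ_f with S′ = S·diag(λ_1,…,λ_f); (ii) there exists A ∈ GL_{v−d−1}(ℝ) with B′ = B·A. -/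

import Mathlib

/-!
Both conditions amount to equality of column spaces. Since `Bᵀ S = 0` and the ranks of `B` and
`S` add up to `v`, the column space of `S` is the kernel of `Bᵀ` and the column space of `B` is
the kernel of `Sᵀ`. Scaling the columns of `S` by nonzero numbers does not change the kernel of
`Sᵀ`, and two matrices of full column rank with the same column space differ by an invertible
factor on the right; this gives (i) ⇒ (ii). Conversely `B' = B A` gives `ker B'ᵀ = ker Bᵀ`, so
`S` and `S'` have the same column space. The vectors of that space vanishing on `Z(j)` are the
images under `S` of the kernel of the rows indexed by `Z(j)`, a space of dimension
`(d + 1) - d = 1` by the facet-rank condition. It contains the `j`th columns of `S` and `S'`,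
both nonzero because `Z(j)` is proper, so they are proportional.
-/

open Matrix Module

namespace Matrix

variable {K : Type*} [Field K] {m n c : Type*}

theorem rank_add_finrank_ker [Fintype n] (M : Matrix m n K) :
    M.rank + finrank K (LinearMap.ker M.mulVecLin) = Fintype.card n := by
  rw [rank, LinearMap.finrank_range_add_finrank_ker, Module.finrank_fintype_fun_eq_card]

theorem range_mulVecLin_eq_ker_transpose [Fintype m] [Fintype n] [Fintype c]
    {M : Matrix m n K} {N : Matrix m c K}
    (h : Nᵀ * M = 0) (hr : M.rank + N.rank = Fintype.card m) :
    LinearMap.range M.mulVecLin = LinearMap.ker Nᵀ.mulVecLin := by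
  refine Submodule.eq_of_le_of_finrank_eq ?_ ?_
  · rw [LinearMap.range_le_ker_iff, ← mulVecLin_mul, h, mulVecLin_zero]
  · have := rank_add_finrank_ker Nᵀ
    rw [rank_transpose] at this
    change M.rank = _
    omega

theorem ker_mulVecLin_mul_of_isUnit_det [Fintype m] [DecidableEq m] [Fintype n]
    {A : Matrix m m K} (hA : IsUnit A.det) (M : Matrix m n K) :
    LinearMap.ker (A * M).mulVecLin = LinearMap.ker M.mulVecLin := by
  rw [mulVecLin_mul, LinearMap.ker_comp_of_ker_eq_bot]
  exact LinearMap.ker_eq_bot.2 (mulVec_injective_iff_isUnit.2 ((isUnit_iff_isUnit_det A).2 hA))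

theorem col_mem_range_mulVecLin [Fintype n] (M : Matrix m n K) (j : n) :
    M.col j ∈ LinearMap.range M.mulVecLin :=
  M.range_mulVecLin ▸ Submodule.subset_span ⟨j, rfl⟩

theorem exists_mul_eq_of_range_le [Fintype n] [Fintype c] {M : Matrix m n K} {M' : Matrix m c K}
    (h : LinearMap.range M'.mulVecLin ≤ LinearMap.range M.mulVecLin) :
    ∃ A : Matrix n c K, M' = M * A := by
  choose cols hcols using fun k => h (M'.col_mem_range_mulVecLin k)
  exact ⟨of fun j k => cols k j, ext fun i k => (congrFun (hcols k) i).symm⟩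

theorem isUnit_det_of_rank_mul_eq_card [Fintype c] [DecidableEq c] {M : Matrix m c K}
    {A : Matrix c c K} (h : (M * A).rank = Fintype.card c) : IsUnit A.det := by
  have hA : finrank K (LinearMap.range A.mulVecLin) = finrank K (c → K) := by
    rw [finrank_fintype_fun_eq_card]
    exact le_antisymm A.rank_le_card_width (h ▸ M.rank_mul_le_right A)
  rw [← isUnit_iff_isUnit_det, ← mulVec_surjective_iff_isUnit]
  exact LinearMap.range_eq_top.1 (Submodule.eq_top_of_finrank_eq hA)

theorem finrank_map_ker_submatrix_add_rank [Fintype n] {ι : Type*} (S : Matrix m n K)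
    (r : ι → m) :
    finrank K ((LinearMap.ker (S.submatrix r id).mulVecLin).map S.mulVecLin)
      + (S.submatrix r id).rank = S.rank := by
  have hle : LinearMap.ker S.mulVecLin ≤ LinearMap.ker (S.submatrix r id).mulVecLin :=
    fun x hx => by
      ext i
      exact congrFun (LinearMap.mem_ker.1 hx) (r i)
  have hmap := LinearMap.finrank_range_add_finrank_ker
    (S.mulVecLin.domRestrict (LinearMap.ker (S.submatrix r id).mulVecLin))
  rw [LinearMap.range_domRestrict, LinearMap.ker_domRestrict,
    (Submodule.comapSubtypeEquivOfLe hle).finrank_eq] at hmap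
  have := S.rank_add_finrank_ker
  have := (S.submatrix r id).rank_add_finrank_ker
  omega

theorem exists_eq_smul_col_of_mem_range [Fintype n] {S : Matrix m n K} {s : Finset m}
    (hs : finrank K (Submodule.span K (S.row '' s)) + 1 = S.rank) {j : n}
    (hjs : ∀ i ∈ s, S i j = 0) (hj : S.col j ≠ 0) {x : m → K}
    (hx : x ∈ LinearMap.range S.mulVecLin) (hxs : ∀ i ∈ s, x i = 0) :
    ∃ a : K, x = a • S.col j := by
  classical
  have hdim := finrank_map_ker_submatrix_add_rank S ((↑) : s → m)
  set R := S.submatrix ((↑) : s → m) id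
  set U := (LinearMap.ker R.mulVecLin).map S.mulVecLin
  have hR : R.rank = finrank K (Submodule.span K (S.row '' s)) := by
    rw [rank_eq_finrank_span_row, Set.image_eq_range]
    rfl
  have hU : finrank K U = 1 := by omega
  have hjU : S.col j ∈ U :=
    ⟨Pi.single j 1, by ext i; simpa [R, mulVec_single_one] using hjs i i.2,
      mulVec_single_one S j⟩
  have hxU : x ∈ U := by
    obtain ⟨y, rfl⟩ := hx
    exact ⟨y, by ext i; exact hxs i i.2, rfl⟩
  obtain ⟨a, ha⟩ := (finrank_eq_one_iff_of_nonzero' (⟨S.col j, hjU⟩ : U)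
    (by simpa using hj)).1 hU ⟨x, hxU⟩
  exact ⟨a, (congrArg Subtype.val ha).symm⟩

theorem exists_eq_mul_diagonal_of_range_le [Fintype m] [Fintype n] [DecidableEq n]
    {S S' : Matrix m n K} {Z : n → Finset m} (hZ : ∀ j, Z j ≠ Finset.univ)
    (hSZ : ∀ i j, S i j = 0 ↔ i ∈ Z j)
    (hS'Z : ∀ i j, S' i j = 0 ↔ i ∈ Z j)
    (hfacet : ∀ j, finrank K (Submodule.span K (S.row '' Z j)) + 1 = S.rank)
    (h : LinearMap.range S'.mulVecLin ≤ LinearMap.range S.mulVecLin) :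
    ∃ lam : n → K, (∀ j, lam j ≠ 0) ∧ S' = S * diagonal lam := by
  have hcol (j : n) : ∃ a : K, a ≠ 0 ∧ S'.col j = a • S.col j := by
    obtain ⟨i, hi⟩ : ∃ i, i ∉ Z j := by simpa [Finset.eq_univ_iff_forall] using hZ j
    obtain ⟨a, ha⟩ := exists_eq_smul_col_of_mem_range (hfacet j)
      (fun i hi => (hSZ i j).2 hi) (fun h => hi ((hSZ i j).1 (congrFun h i)))
      (h (S'.col_mem_range_mulVecLin j)) (fun i hi => (hS'Z i j).2 hi)
    refine ⟨a, fun ha0 => hi ((hS'Z i j).1 ?_), ha⟩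
    simpa [ha0] using congrFun ha i
  choose lam hlam0 hlam using hcol
  refine ⟨lam, hlam0, ext fun i j => ?_⟩
  simpa [mul_comm] using congrFun (hlam j) i

end Matrix

theorem stmt6_general (d v f : ℕ) (hv : d + 1 < v)
    (Z : Fin f → Finset (Fin v)) (hZ : ∀ j, Z j ≠ Finset.univ)
    (𝒮 : Set (Matrix (Fin v) (Fin f) ℝ))
    (h𝒮 : 𝒮 = {S | S.rank = d + 1 ∧ ∀ i j, S i j = 0 ↔ i ∈ Z j})
    (S S' : Matrix (Fin v) (Fin f) ℝ) (hS : S ∈ 𝒮) (hS' : S' ∈ 𝒮)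
    (hfacet : ∀ j, Module.finrank ℝ
      ↥(Submodule.span ℝ ((fun i => S i) '' (Z j : Set (Fin v)))) = d)
    (B B' : Matrix (Fin v) (Fin (v - (d + 1))) ℝ)
    (hB : B.rank = v - (d + 1)) (hBS : Bᵀ * S = 0)
    (hB' : B'.rank = v - (d + 1)) (hB'S' : B'ᵀ * S' = 0) :
    (∃ lam : Fin f → ℝ, (∀ j, lam j ≠ 0) ∧ S' = S * Matrix.diagonal lam) ↔
      ∃ A : Matrix (Fin (v - (d + 1))) (Fin (v - (d + 1))) ℝ, IsUnit A.det ∧ B' = B * A := by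
  subst h𝒮
  obtain ⟨hSrank, hSZ⟩ := hS
  obtain ⟨hS'rank, hS'Z⟩ := hS'
  have hcard : Fintype.card (Fin v) = v := Fintype.card_fin v
  have hSB : Sᵀ * B = 0 := by simpa using congrArg transpose hBS
  have hS'B' : S'ᵀ * B' = 0 := by simpa using congrArg transpose hB'S'
  constructor
  · rintro ⟨lam, hlam, rfl⟩
    have hker : LinearMap.ker (S * diagonal lam)ᵀ.mulVecLin = LinearMap.ker Sᵀ.mulVecLin := by
      rw [transpose_mul, diagonal_transpose]
      exact ker_mulVecLin_mul_of_isUnit_det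
        (by simp [det_diagonal, Finset.prod_ne_zero_iff, hlam]) _
    have hrange : LinearMap.range B'.mulVecLin = LinearMap.range B.mulVecLin := by
      rw [range_mulVecLin_eq_ker_transpose hS'B' (by omega), hker,
        range_mulVecLin_eq_ker_transpose hSB (by omega)]
    obtain ⟨A, rfl⟩ := exists_mul_eq_of_range_le hrange.le
    exact ⟨A, isUnit_det_of_rank_mul_eq_card (by simpa using hB'), rfl⟩
  · rintro ⟨A, hA, rfl⟩
    have hrange : LinearMap.range S'.mulVecLin = LinearMap.range S.mulVecLin := by
      rw [range_mulVecLin_eq_ker_transpose hB'S' (by omega), transpose_mul,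
        ker_mulVecLin_mul_of_isUnit_det (by rwa [det_transpose]),
        range_mulVecLin_eq_ker_transpose hBS (by omega)]
    exact exists_eq_mul_diagonal_of_range_le hZ hSZ hS'Z
      (fun j => by rw [hSrank]; exact congrArg (· + 1) (hfacet j)) hrange.le

/-- Corollary (slackDgrassequiv, pointwise): two elements of the slack variety differ by a
column scaling iff their Gale transforms differ by right multiplication by an element of
`GL_{v-d-1}(ℝ)`. -/
theorem stmt6 (d v f : ℕ) (hd : 1 ≤ d) (hv : d + 1 < v)
    (Z : Fin f → Finset (Fin v)) (hZ : ∀ j, Z j ≠ Finset.univ)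
    (𝒮 : Set (Matrix (Fin v) (Fin f) ℝ))
    (h𝒮 : 𝒮 = {S | S.rank = d + 1 ∧ ∀ i j, S i j = 0 ↔ i ∈ Z j})
    (S S' : Matrix (Fin v) (Fin f) ℝ) (hS : S ∈ 𝒮) (hS' : S' ∈ 𝒮)
    (hfacet : ∀ j, Module.finrank ℝ
      ↥(Submodule.span ℝ ((fun i => S i) '' (Z j : Set (Fin v)))) = d)
    (B B' : Matrix (Fin v) (Fin (v - (d + 1))) ℝ)
    (hB : B.rank = v - (d + 1)) (hBS : Bᵀ * S = 0)
    (hB' : B'.rank = v - (d + 1)) (hB'S' : B'ᵀ * S' = 0) :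
    (∃ lam : Fin f → ℝ, (∀ j, lam j ≠ 0) ∧ S' = S * Matrix.diagonal lam) ↔
      ∃ A : Matrix (Fin (v - (d + 1))) (Fin (v - (d + 1))) ℝ, IsUnit A.det ∧ B' = B * A :=
  stmt6_general d v f hv Z hZ 𝒮 h𝒮 S S' hS hS' hfacet B B' hB hBS hB' hB'S'
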